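/- Strict ellipticity of the Hessian-quotient-type operator: Let 1 ≤ l < k ≤ n−1. There exists a positive constant c > 0 depending only on n, k and l such that for every λ ∈ ℝⁿ with η ∈ Γ_{k+1}, where η_i = Σ_{j=1}^n λ_j − λ_i, the numbers f_i = (1/(k−l)) · (σ_k(η)/σ_l(η))^{1/(k−l) − 1} · Σ_{p≠i} (σ_{k−1}(η|p)·σ_l(η) − σ_k(η)·σ_{l−1}(η|p)) / σ_l(η)² satisfy Σ_{i=1}^n f_i ≥ c. -/

import Mathlib

/-- The `m`-th elementary symmetric function of `x ∈ ℝⁿ`. -/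
noncomputable def esym (n m : ℕ) (x : Fin n → ℝ) : ℝ :=
  ∑ s ∈ Finset.univ.powersetCard m, ∏ i ∈ s, x i

/-- `σ_m(x|p)`: the `m`-th elementary symmetric function of the vector obtained from `x`
by deleting the entry `x p`. -/
noncomputable def esymDel (n m : ℕ) (x : Fin n → ℝ) (p : Fin n) : ℝ :=
  ∑ s ∈ (Finset.univ.erase p).powersetCard m, ∏ i ∈ s, x i

/-- The Gårding cone `Γ_k ⊂ ℝⁿ`. -/
def GardingCone (n k : ℕ) : Set (Fin n → ℝ) :=
  {x | ∀ i : ℕ, 1 ≤ i → i ≤ k → 0 < esym n i x}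

/-!
Put `E_j = σ_j(η) / C(n, j)`. Since `∑_p σ_j(η|p) = (n - j) σ_j(η)`,
  `∑ f_i = (n - 1) / (k - l) · (σ_k / σ_l)^(1/(k-l) - 1) · C(n,k) / C(n,l)`
  `        · (k E_{k-1} E_l - l E_k E_{l-1}) / E_l²`.
Newton's inequalities `E_j E_{j+2} ≤ E_{j+1}²` make `E` log-concave, and it is positive on `0, …, k`
in the cone. They are proved by replacing the numbers with the roots of the derivative of
`∏ (X - x_i)`, which are real by Rolle's theorem and have the same `E_j`, until only `j + 2`
numbers are left; there, with `b_p = ∏_{i ≠ p} x_i`, the inequality is Cauchy–Schwarz for `b`.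
Log-concavity gives `E_k E_{l-1} ≤ E_{k-1} E_l` and `E_k^(k-l-1) E_l ≤ E_{k-1}^(k-l)`, and these two
bounds yield `∑ f_i ≥ (n - 1) (C(n,k) / C(n,l))^(1/(k-l))`.
-/

open Finset Polynomial

namespace Finset

theorem sum_powersetCard_card_sub_one {α M : Type*} [DecidableEq α] [AddCommMonoid M]
    {u : Finset α} (hu : u.Nonempty) (f : Finset α → M) :
    ∑ t ∈ u.powersetCard (#u - 1), f t = ∑ p ∈ u, f (u.erase p) := by
  have hu₀ : 0 < #u := hu.card_pos
  have himage : u.powersetCard (#u - 1) = u.image u.erase := by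
    ext t
    simp only [mem_powersetCard, mem_image]
    constructor
    · rintro ⟨htu, ht⟩
      obtain ⟨p, hpu, hpt⟩ := exists_mem_notMem_of_card_lt_card (s := t) (t := u) (by omega)
      refine ⟨p, hpu, (eq_of_subset_of_card_le (subset_erase.mpr ⟨htu, hpt⟩) ?_).symm⟩
      rw [card_erase_of_mem hpu, ht]
    · rintro ⟨p, hpu, rfl⟩
      exact ⟨erase_subset p u, card_erase_of_mem hpu⟩
  rw [himage, sum_image u.erase_injOn]

theorem sum_sum_powersetCard_erase {ι M : Type*} [Fintype ι] [DecidableEq ι] [AddCommMonoid M]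
    (j : ℕ) (f : Finset ι → M) :
    ∑ p, ∑ t ∈ (univ.erase p).powersetCard j, f t =
      (Fintype.card ι - j) • ∑ t ∈ univ.powersetCard j, f t := by
  rw [sum_comm' (t' := univ.powersetCard j) (s' := fun t => tᶜ), smul_sum]
  · refine sum_congr rfl fun t ht => ?_
    rw [sum_const, card_compl, (mem_powersetCard_univ.mp ht)]
  · intro p t
    simp [subset_erase, and_comm]

theorem prod_erase_erase_mul_prod {α M : Type*} [DecidableEq α] [CommMonoid M] {s : Finset α}
    {p q : α} (hp : p ∈ s) (hq : q ∈ s.erase p) (x : α → M) :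
    (∏ i ∈ (s.erase p).erase q, x i) * ∏ i ∈ s, x i =
      (∏ i ∈ s.erase p, x i) * ∏ i ∈ s.erase q, x i := by
  have hp' : p ∈ s.erase q := mem_erase.mpr ⟨(ne_of_mem_erase hq).symm, hp⟩
  have h₁ := mul_prod_erase _ x hp
  have h₂ := mul_prod_erase _ x hq
  have h₃ := mul_prod_erase _ x hp'
  rw [erase_right_comm] at h₃
  rw [← h₁, ← h₂, ← h₃]
  ac_rfl

theorem sum_mul_sum_erase {ι R : Type*} [Fintype ι] [DecidableEq ι] [CommRing R] (c : R)
    (g : ι → R) :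
    ∑ i, c * ∑ p ∈ univ.erase i, g p = (Fintype.card ι - 1) * (c * ∑ p, g p) := by
  simp only [sum_erase_eq_sub (mem_univ _), mul_sub, sum_sub_distrib, sum_const, card_univ,
    nsmul_eq_mul, ← mul_sum]
  ring

end Finset

namespace Fintype

variable {ι : Type*} [Fintype ι] [DecidableEq ι] {j : ℕ}

theorem two_mul_sum_powersetCard_mul_prod {R : Type*} [CommRing R] (hι : card ι = j + 2)
    (x : ι → R) :
    2 * (∑ t ∈ univ.powersetCard j, ∏ i ∈ t, x i) * ∏ i, x i =
      (∑ p, ∏ i ∈ univ.erase p, x i) ^ 2 - ∑ p, (∏ i ∈ univ.erase p, x i) ^ 2 := by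
  have hsub_two : 2 * ∑ t ∈ univ.powersetCard j, ∏ i ∈ t, x i =
      ∑ p, ∑ q ∈ univ.erase p, ∏ i ∈ (univ.erase p).erase q, x i := by
    have := sum_sum_powersetCard_erase j fun t => ∏ i ∈ t, x i
    rw [hι, show j + 2 - j = 2 by omega, two_nsmul, ← two_mul] at this
    rw [← this]
    refine Finset.sum_congr rfl fun p _ => ?_
    have hcard : #(univ.erase p) = j + 1 := by
      rw [card_erase_of_mem (mem_univ p), card_univ, hι]; rfl
    rw [show j = #(univ.erase p) - 1 by omega, sum_powersetCard_card_sub_one]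
    rw [← Finset.card_pos, hcard]
    omega
  rw [hsub_two, sum_mul]
  calc ∑ p, (∑ q ∈ univ.erase p, ∏ i ∈ (univ.erase p).erase q, x i) * ∏ i, x i
      = ∑ p, (∏ i ∈ univ.erase p, x i) *
          ((∑ q, ∏ i ∈ univ.erase q, x i) - ∏ i ∈ univ.erase p, x i) := by
        refine Finset.sum_congr rfl fun p _ => ?_
        rw [sum_mul, ← sum_erase_eq_sub (mem_univ p), mul_sum]
        exact Finset.sum_congr rfl fun q hq => prod_erase_erase_mul_prod (mem_univ p) hq x
    _ = _ := by simp only [mul_sub, sum_sub_distrib, ← sum_mul, sq]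

theorem two_mul_esymm_mul_esymm_le_sq (hι : card ι = j + 2) (x : ι → ℝ) :
    2 * (j + 2) * ((univ.val.map x).esymm j * (univ.val.map x).esymm (j + 2)) ≤
      (j + 1) * (univ.val.map x).esymm (j + 1) ^ 2 := by
  have : Nonempty ι := card_pos_iff.mp (by omega)
  have htop : ∑ t ∈ univ.powersetCard (j + 2), ∏ i ∈ t, x i = ∏ i, x i := by
    rw [← hι, ← card_univ, powersetCard_self, sum_singleton]
  have hsub_one : ∑ t ∈ univ.powersetCard (j + 1), ∏ i ∈ t, x i = ∑ p, ∏ i ∈ univ.erase p, x i := by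
    rw [show j + 1 = #(univ : Finset ι) - 1 by rw [card_univ, hι]; rfl,
      sum_powersetCard_card_sub_one univ_nonempty]
  have hcs := sq_sum_le_card_mul_sum_sq (s := univ) (f := fun p => ∏ i ∈ univ.erase p, x i)
  rw [card_univ, hι, Nat.cast_add, Nat.cast_two] at hcs
  simp only [Finset.esymm_map_val, htop, hsub_one]
  linear_combination (j + 2 : ℝ) * two_mul_sum_powersetCard_mul_prod hι x + hcs

end Fintype

namespace Multiset

theorem two_mul_esymm_mul_esymm_le_sq {s : Multiset ℝ} {j : ℕ} (hs : card s = j + 2) :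
    2 * (j + 2) * (s.esymm j * s.esymm (j + 2)) ≤ (j + 1) * s.esymm (j + 1) ^ 2 := by
  classical
  have := Fintype.two_mul_esymm_mul_esymm_le_sq (ι := s) (by rwa [Multiset.card_coe])
    fun a => (a : ℝ)
  rwa [map_univ_coe] at this

theorem exists_card_eq_esymm_eq {s : Multiset ℝ} {N : ℕ} (hs : card s = N + 1) :
    ∃ t : Multiset ℝ, card t = N ∧
      ∀ j ≤ N, (N + 1) * t.esymm j = (N + 1 - j) * s.esymm j := by
  set P := (s.map fun a => X - C a).prod
  set D := derivative P
  have hP_deg : P.natDegree = N + 1 := by rw [natDegree_multiset_prod_X_sub_C_eq_card, hs]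
  have hD_deg : D.natDegree = N := by rw [natDegree_derivative, hP_deg]; rfl
  have hD_card : card D.roots = N := by
    refine le_antisymm ((card_roots' D).trans hD_deg.le) ?_
    have : card P.roots ≤ card D.roots + 1 := card_roots_le_derivative P
    rw [roots_multiset_prod_X_sub_C, hs] at this
    omega
  refine ⟨D.roots, hD_card, fun j hj => ?_⟩
  have hD_lead : D.leadingCoeff = N + 1 := by
    rw [leadingCoeff_derivative, (monic_multisetProd_X_sub_C s).leadingCoeff, hP_deg]
    push_cast; ring
  have hvieta := coeff_eq_esymm_roots_of_card (hD_card.trans hD_deg.symm)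
    (k := N - j) (by omega)
  rw [coeff_derivative, prod_X_sub_C_coeff s (by omega), hD_lead, hD_deg, hs,
    show N + 1 - (N - j + 1) = j by omega, show N - (N - j) = j by omega,
    Nat.cast_sub hj] at hvieta
  have hsign : ((-1 : ℝ) ^ j) ^ 2 = 1 := by rw [← pow_mul, Even.neg_one_pow ⟨j, by ring⟩]
  linear_combination (-1 : ℝ) ^ j * hvieta.symm +
    (((N : ℝ) - j + 1) * s.esymm j - (N + 1) * D.roots.esymm j) * hsign

noncomputable def esymmMean (s : Multiset ℝ) (j : ℕ) : ℝ := s.esymm j / (card s).choose j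

theorem choose_mul_esymmMean (s : Multiset ℝ) (j : ℕ) :
    (card s).choose j * s.esymmMean j = s.esymm j := by
  rcases le_or_gt j (card s) with hj | hj
  · exact mul_div_cancel₀ _ (Nat.cast_ne_zero.mpr (Nat.choose_pos hj).ne')
  · simp [esymmMean, esymm, powersetCard_eq_empty _ hj]

theorem exists_card_eq_esymmMean_eq {s : Multiset ℝ} {N : ℕ} (hs : card s = N + 1) :
    ∃ t : Multiset ℝ, card t = N ∧ ∀ j ≤ N, t.esymmMean j = s.esymmMean j := by
  obtain ⟨t, ht, hesymm⟩ := exists_card_eq_esymm_eq hs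
  refine ⟨t, ht, fun j hj => ?_⟩
  have hchoose : ((N.choose j * (N + 1) : ℕ) : ℝ) = ((N + 1).choose j * (N + 1 - j) : ℕ) :=
    congrArg _ (Nat.choose_mul_succ_eq N j)
  rw [Nat.cast_mul, Nat.cast_mul, Nat.cast_sub (by omega)] at hchoose
  push_cast at hchoose
  have hN : (N + 1 : ℝ) * (N + 1 - j) ≠ 0 := by
    have : (j : ℝ) ≤ N := by exact_mod_cast hj
    exact mul_ne_zero (by positivity) (by linarith)
  rw [esymmMean, esymmMean, ht, hs, div_eq_div_iff (by exact_mod_cast (Nat.choose_pos hj).ne')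
    (by exact_mod_cast (Nat.choose_pos (by omega : j ≤ N + 1)).ne')]
  apply mul_left_cancel₀ hN
  linear_combination ((N : ℝ) + 1 - j) * (N + 1).choose j * hesymm j hj -
    ((N : ℝ) + 1 - j) * s.esymm j * hchoose

theorem esymmMean_mul_esymmMean_le_sq_of_card_eq {s : Multiset ℝ} {j : ℕ} (hs : card s = j + 2) :
    s.esymmMean j * s.esymmMean (j + 2) ≤ s.esymmMean (j + 1) ^ 2 := by
  have hj : ((j + 2).choose j : ℝ) = (j + 2) * (j + 1) / 2 := by
    rw [Nat.choose_symm_add, Nat.cast_choose_two]; push_cast; ring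
  have hj₁ : ((j + 2).choose (j + 1) : ℝ) = j + 2 := by
    rw [Nat.choose_succ_self_right]; push_cast; ring
  simp only [esymmMean, hs, hj, hj₁, Nat.choose_self, Nat.cast_one, div_one]
  rw [div_pow, div_mul_eq_mul_div, div_le_div_iff₀ (by positivity) (by positivity)]
  linear_combination ((j + 2 : ℝ) / 2) * two_mul_esymm_mul_esymm_le_sq hs

theorem esymmMean_mul_esymmMean_le_sq (s : Multiset ℝ) {j : ℕ} (hj : j + 2 ≤ card s) :
    s.esymmMean j * s.esymmMean (j + 2) ≤ s.esymmMean (j + 1) ^ 2 := by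
  obtain ⟨N, hN⟩ : ∃ N, card s = N := ⟨_, rfl⟩
  rw [hN] at hj
  induction N, hj using Nat.le_induction generalizing s with
  | base => exact esymmMean_mul_esymmMean_le_sq_of_card_eq hN
  | succ N hjN ih =>
    obtain ⟨t, ht, hmean⟩ := exists_card_eq_esymmMean_eq hN
    rw [← hmean j (by omega), ← hmean (j + 1) (by omega), ← hmean (j + 2) hjN]
    exact ih t ht

end Multiset

section LogConcave

variable {a : ℕ → ℝ} {K : ℕ}

theorem succ_mul_le_mul_succ_of_log_concave (hpos : ∀ j ≤ K, 0 < a j)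
    (hlc : ∀ j, j + 2 ≤ K → a j * a (j + 2) ≤ a (j + 1) ^ 2) {i j : ℕ} (hij : i ≤ j)
    (hjK : j + 1 ≤ K) : a (j + 1) * a i ≤ a j * a (i + 1) := by
  induction j, hij using Nat.le_induction with
  | base => exact (mul_comm _ _).le
  | succ j hij ih =>
    refine le_of_mul_le_mul_right ?_ (hpos (j + 1) (by omega))
    calc a (j + 1 + 1) * a i * a (j + 1) = a (j + 2) * (a (j + 1) * a i) := by ring
      _ ≤ a (j + 2) * (a j * a (i + 1)) :=
          mul_le_mul_of_nonneg_left (ih (by omega)) (hpos _ hjK).le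
      _ = a j * a (j + 2) * a (i + 1) := by ring
      _ ≤ a (j + 1) ^ 2 * a (i + 1) :=
          mul_le_mul_of_nonneg_right (hlc j hjK) (hpos _ (by omega)).le
      _ = a (j + 1) * a (i + 1) * a (j + 1) := by ring

theorem pow_mul_le_pow_succ_of_log_concave (hpos : ∀ j ≤ K, 0 < a j)
    (hlc : ∀ j, j + 2 ≤ K → a j * a (j + 2) ≤ a (j + 1) ^ 2) {i d : ℕ} (hK : i + d + 1 ≤ K) :
    a (i + d + 1) ^ d * a i ≤ a (i + d) ^ (d + 1) := by
  induction d generalizing i with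
  | zero => simp
  | succ d ih =>
    have hratio := succ_mul_le_mul_succ_of_log_concave hpos hlc (i := i) (j := i + d + 1)
      (by omega) (by omega)
    have hstep : a (i + d + 1 + 1) ^ d * a (i + 1) ≤ a (i + d + 1) ^ (d + 1) := by
      have := ih (i := i + 1) (by omega)
      rwa [show i + 1 + d = i + d + 1 by omega] at this
    rw [show i + (d + 1) = i + d + 1 by omega]
    calc a (i + d + 1 + 1) ^ (d + 1) * a i
        = a (i + d + 1 + 1) ^ d * (a (i + d + 1 + 1) * a i) := by ring
      _ ≤ a (i + d + 1 + 1) ^ d * (a (i + d + 1) * a (i + 1)) :=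
          mul_le_mul_of_nonneg_left hratio (pow_nonneg (hpos _ hK).le _)
      _ = a (i + d + 1 + 1) ^ d * a (i + 1) * a (i + d + 1) := by ring
      _ ≤ a (i + d + 1) ^ (d + 1) * a (i + d + 1) :=
          mul_le_mul_of_nonneg_right hstep (hpos _ (by omega)).le
      _ = a (i + d + 1) ^ (d + 1 + 1) := by ring

end LogConcave

theorem rpow_le_mul_rpow_sub_one_mul {β u v : ℝ} {m : ℕ} (hβ : 0 < β) (hu : 0 < u) (hv : 0 < v)
    (hm : 0 < m) (huv : u ^ (m - 1) ≤ v ^ m) :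
    β ^ (1 / m : ℝ) ≤ (β * u) ^ (1 / m - 1 : ℝ) * (β * v) := by
  have hm' : (0 : ℝ) < m := by exact_mod_cast hm
  have hv' : u ^ (1 - 1 / m : ℝ) ≤ v := by
    rw [← Real.rpow_le_rpow_iff (by positivity) hv.le hm', ← Real.rpow_mul hu.le,
      show (1 - 1 / m : ℝ) * m = ((m - 1 : ℕ) : ℝ) by rw [Nat.cast_sub hm]; field_simp; ring,
      Real.rpow_natCast, Real.rpow_natCast]
    exact huv
  calc β ^ (1 / m : ℝ) = β ^ (1 / m - 1 : ℝ) * β * (u ^ (1 / m - 1 : ℝ) * u ^ (1 - 1 / m : ℝ)) := by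
        rw [← Real.rpow_add hu, ← Real.rpow_add_one hβ.ne']
        norm_num
    _ ≤ β ^ (1 / m - 1 : ℝ) * β * (u ^ (1 / m - 1 : ℝ) * v) := by gcongr
    _ = (β * u) ^ (1 / m - 1 : ℝ) * (β * v) := by rw [Real.mul_rpow hβ.le hu.le]; ring

theorem rpow_le_one_div_mul_rpow_mul_of_log_concave {a : ℕ → ℝ} {k l : ℕ} (hpos : ∀ j ≤ k, 0 < a j)
    (hlc : ∀ j, j + 2 ≤ k → a j * a (j + 2) ≤ a (j + 1) ^ 2) (hl : 1 ≤ l) (hlk : l < k)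
    {β : ℝ} (hβ : 0 < β) :
    β ^ (1 / ((k : ℝ) - l)) ≤ 1 / ((k : ℝ) - l) * (β * (a k / a l)) ^ (1 / ((k : ℝ) - l) - 1) *
      (β * ((k * a (k - 1) * a l - l * a k * a (l - 1)) / a l ^ 2)) := by
  obtain ⟨i, rfl⟩ : ∃ i, l = i + 1 := ⟨l - 1, by omega⟩
  obtain ⟨d, rfl⟩ : ∃ d, k = i + 1 + d + 1 := ⟨k - (i + 1) - 1, by omega⟩
  simp only [Nat.add_sub_cancel]
  have hm : ((i + 1 + d + 1 : ℕ) : ℝ) - (i + 1 : ℕ) = (d + 1 : ℕ) := by push_cast; ring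
  rw [hm]
  have hratio := succ_mul_le_mul_succ_of_log_concave hpos hlc (i := i) (j := i + 1 + d)
    (by omega) le_rfl
  have hconcave := pow_mul_le_pow_succ_of_log_concave hpos hlc (i := i + 1) (d := d) le_rfl
  have ha := hpos (i + 1) (by omega)
  have huv : (a (i + 1 + d + 1) / a (i + 1)) ^ (d + 1 - 1) ≤
      (a (i + 1 + d) / a (i + 1)) ^ (d + 1) := by
    rw [Nat.add_sub_cancel, div_pow, div_pow, div_le_div_iff₀ (by positivity) (by positivity)]
    calc a (i + 1 + d + 1) ^ d * a (i + 1) ^ (d + 1)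
        = a (i + 1 + d + 1) ^ d * a (i + 1) * a (i + 1) ^ d := by ring
      _ ≤ a (i + 1 + d) ^ (d + 1) * a (i + 1) ^ d := by gcongr
  calc β ^ (1 / ((d + 1 : ℕ) : ℝ))
      ≤ (β * (a (i + 1 + d + 1) / a (i + 1))) ^ (1 / ((d + 1 : ℕ) : ℝ) - 1) *
          (β * (a (i + 1 + d) / a (i + 1))) :=
        rpow_le_mul_rpow_sub_one_mul hβ (div_pos (hpos _ le_rfl) ha)
          (div_pos (hpos _ (by omega)) ha) d.succ_pos huv
    _ = 1 / ((d + 1 : ℕ) : ℝ) *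
          (β * (a (i + 1 + d + 1) / a (i + 1))) ^ (1 / ((d + 1 : ℕ) : ℝ) - 1) *
          (β * (((d + 1 : ℕ) : ℝ) * a (i + 1 + d) * a (i + 1) / a (i + 1) ^ 2)) := by
        field_simp
    _ ≤ _ := by
        gcongr ?_ * (β * (?_ / _))
        · have := hpos (i + 1 + d + 1) le_rfl
          positivity
        · push_cast
          linear_combination (i + 1 : ℝ) * hratio

theorem esym_eq_choose_mul_esymmMean (n j : ℕ) (x : Fin n → ℝ) :
    esym n j x = n.choose j * (univ.val.map x).esymmMean j := by
  have := (univ.val.map x).choose_mul_esymmMean j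
  rw [esym, ← Finset.esymm_map_val, ← this]
  simp

theorem sum_esymDel_pred (n : ℕ) {j : ℕ} (hj : 1 ≤ j) (x : Fin n → ℝ) :
    ∑ p, esymDel n (j - 1) x p = j * n.choose j * (univ.val.map x).esymmMean (j - 1) := by
  have hsum : ∑ p, esymDel n (j - 1) x p = (n - (j - 1)) • esym n (j - 1) x := by
    have h := sum_sum_powersetCard_erase (ι := Fin n) (j - 1) fun t => ∏ i ∈ t, x i
    rwa [Fintype.card_fin] at h
  rw [hsum, esym_eq_choose_mul_esymmMean, nsmul_eq_mul, ← mul_assoc]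
  congr 1
  norm_cast
  rw [mul_comm, ← Nat.choose_succ_right_eq, Nat.sub_add_cancel hj, mul_comm]

theorem esymmMean_pos_of_mem_gardingCone {n K j : ℕ} {η : Fin n → ℝ}
    (hη : η ∈ GardingCone n K) (hjK : j ≤ K) :
    0 < (univ.val.map η).esymmMean j := by
  rcases Nat.eq_zero_or_pos j with rfl | hj₀
  · simp [Multiset.esymmMean, Multiset.esymm]
  · have := hη j hj₀ hjK
    rw [esym_eq_choose_mul_esymmMean] at this
    exact pos_of_mul_pos_right this (Nat.cast_nonneg _)

/-- Strict ellipticity of the Hessian-quotient-type operator. -/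
theorem stmt_11 (n k l : ℕ) (hl1 : 1 ≤ l) (hlk : l < k) (hkn : k ≤ n - 1) :
    ∃ c : ℝ, 0 < c ∧
      ∀ lam η : Fin n → ℝ,
        (∀ i : Fin n, η i = (∑ j : Fin n, lam j) - lam i) →
        η ∈ GardingCone n (k + 1) →
        c ≤ ∑ i : Fin n,
            (1 / ((k : ℝ) - (l : ℝ))) *
              (esym n k η / esym n l η) ^ ((1 : ℝ) / ((k : ℝ) - (l : ℝ)) - 1) *
              ∑ p ∈ Finset.univ.erase i,
                (esymDel n (k - 1) η p * esym n l η - esym n k η * esymDel n (l - 1) η p) /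
                  (esym n l η) ^ 2 := by
  have hchoose (j : ℕ) (hj : j ≤ n) : (0 : ℝ) < n.choose j := by exact_mod_cast Nat.choose_pos hj
  have hβ : (0 : ℝ) < n.choose k / n.choose l :=
    div_pos (hchoose k (by omega)) (hchoose l (by omega))
  have hn : (1 : ℝ) < n := by exact_mod_cast (by omega : 1 < n)
  refine ⟨(n - 1) * ((n.choose k / n.choose l : ℝ) ^ (1 / ((k : ℝ) - l))),
    mul_pos (by linarith) (Real.rpow_pos_of_pos hβ _), fun _ η _ hη => ?_⟩
  have hcard : Multiset.card (univ.val.map η) = n := by simp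
  have hE_pos (j : ℕ) (hj : j ≤ k) : 0 < (univ.val.map η).esymmMean j :=
    esymmMean_pos_of_mem_gardingCone hη (by omega)
  have hE_concave (j : ℕ) (hj : j + 2 ≤ k) :
      (univ.val.map η).esymmMean j * (univ.val.map η).esymmMean (j + 2) ≤
        (univ.val.map η).esymmMean (j + 1) ^ 2 :=
    Multiset.esymmMean_mul_esymmMean_le_sq _ (by rw [hcard]; omega)
  rw [sum_mul_sum_erase, Fintype.card_fin, ← sum_div, sum_sub_distrib, ← sum_mul, ← mul_sum,
    sum_esymDel_pred n (by omega), sum_esymDel_pred n hl1]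
  simp only [esym_eq_choose_mul_esymmMean]
  generalize (univ.val.map η).esymmMean = E at hE_pos hE_concave ⊢
  have := hE_pos l hlk.le
  have := hchoose l (by omega)
  calc _ ≤ (n - 1) * (1 / ((k : ℝ) - l) *
        ((n.choose k / n.choose l : ℝ) * (E k / E l)) ^ (1 / ((k : ℝ) - l) - 1) *
          ((n.choose k / n.choose l : ℝ) *
            ((k * E (k - 1) * E l - l * E k * E (l - 1)) / E l ^ 2))) := by
        gcongr
        exact rpow_le_one_div_mul_rpow_mul_of_log_concave hE_pos hE_concave hl1 hlk hβ
    _ = _ := by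
        rw [mul_div_mul_comm]
        field_simp
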